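/- arXiv:2305.00544 — 2 statements merged into one kernel-verified Lean document; each statement's English description precedes it below -/
import Mathlib

section
/- For any reals c_1, ..., c_L with 0 ≤ c_j ≤ B for all j and Σ_j c_j ≤ M, the quantity D(c) = Σ_{j=1}^L (2/M) max(c_j - 2^{L-j}, 0) + (2/M) max(M - Σ_j c_j - 1, 0) is minimized (over all such choices) by taking c_j according to the recursion c_1 = min(M/2, B), c_j = min((M - Σ_{k<j} c_k)/2, B), provided 2^L ≤ M and B ≥ 1. -/
/-!
Write `R_j = M - ∑_{k ≤ j} c_k` for the mass left after `j` steps. For every feasible `c'`,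
`max (c'_j - 2^(L-j)) 0 ≥ c'_j - min B 2^(L-j)` (as `c'_j ≤ B`) and the last term is at least
`M - ∑ c'_j - 1`, so `D(c') ≥ (2/M) (M - 1 - ∑_j min B 2^(L-j))`. The greedy step takes at most
half of the remaining mass, so `R_j ≥ M / 2^j ≥ 2^(L-j)`; hence every `max` in `D(c)` is attained
by its first argument (after replacing `2^(L-j)` by `min B 2^(L-j)`) and the bound is an equality.
-/

open Finset

/-- `D(c)` without its factor `2 / M`. -/
def excess (M L : ℕ) (c : ℕ → ℝ) : ℝ :=
  ∑ j ∈ Icc 1 L, max (c j - 2 ^ (L - j)) 0 + max ((M : ℝ) - ∑ j ∈ Icc 1 L, c j - 1) 0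

section OrderedGroup

variable {α : Type*} [AddCommGroup α] [LinearOrder α] [IsOrderedAddMonoid α]

lemma sub_min_le_max_sub_zero {x a b : α} (hx : x ≤ b) : x - min b a ≤ max (x - a) 0 := by
  rcases le_total b a with h | h
  · rw [min_eq_left h]
    exact (sub_nonpos.2 hx).trans (le_max_right _ _)
  · rw [min_eq_right h]
    exact le_max_left _ _

lemma max_min_sub_zero_eq {x a b : α} (hax : a ≤ x) :
    max (min x b - a) 0 = min x b - min b a := by
  rcases le_total b a with h | h
  · rw [min_eq_right (h.trans hax), min_eq_left h, sub_self, max_eq_right (sub_nonpos.2 h)]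
  · rw [min_eq_right h, max_eq_left (sub_nonneg.2 (le_min hax h))]

end OrderedGroup

lemma sub_sum_min_le_excess (M L : ℕ) {B : ℝ} {c : ℕ → ℝ}
    (hcB : ∀ j ∈ Icc 1 L, c j ≤ B) :
    (M : ℝ) - 1 - ∑ j ∈ Icc 1 L, min B (2 ^ (L - j)) ≤ excess M L c := by
  have hterms : ∑ j ∈ Icc 1 L, (c j - min B (2 ^ (L - j))) ≤
      ∑ j ∈ Icc 1 L, max (c j - 2 ^ (L - j)) 0 :=
    sum_le_sum fun j hj ↦ sub_min_le_max_sub_zero (hcB j hj)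
  have hlast := le_max_left ((M : ℝ) - ∑ j ∈ Icc 1 L, c j - 1) 0
  rw [sum_sub_distrib] at hterms
  unfold excess
  linarith

lemma div_two_pow_le_sub_sum {M : ℝ} {c : ℕ → ℝ} {n : ℕ}
    (hhalf : ∀ j < n, c (j + 1) ≤ (M - ∑ k ∈ Icc 1 j, c k) / 2) :
    M / 2 ^ n ≤ M - ∑ k ∈ Icc 1 n, c k := by
  induction n with
  | zero => simp
  | succ n ih =>
    have hrem := ih fun j hj ↦ hhalf j (Nat.lt_succ_of_lt hj)
    have hstep := hhalf n n.lt_succ_self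
    rw [sum_Icc_succ_top (Nat.le_add_left 1 n), pow_succ, ← div_div]
    linarith

lemma greedy_rec {M L : ℕ} {B : ℝ} {c : ℕ → ℝ} (hc1 : c 1 = min ((M : ℝ) / 2) B)
    (hcj : ∀ j, 1 < j → j ≤ L → c j = min (((M : ℝ) - ∑ k ∈ Icc 1 (j - 1), c k) / 2) B) :
    ∀ j ∈ Icc 1 L, c j = min (((M : ℝ) - ∑ k ∈ Icc 1 (j - 1), c k) / 2) B := by
  intro j hj
  obtain ⟨h1, hjL⟩ := mem_Icc.1 hj
  obtain rfl | h1 := h1.eq_or_lt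
  · simpa using hc1
  · exact hcj j h1 hjL

lemma excess_of_greedy {M L : ℕ} (hML : 2 ^ L ≤ M) {B : ℝ} {c : ℕ → ℝ}
    (hrec : ∀ j ∈ Icc 1 L, c j = min (((M : ℝ) - ∑ k ∈ Icc 1 (j - 1), c k) / 2) B) :
    excess M L c = (M : ℝ) - 1 - ∑ j ∈ Icc 1 L, min B (2 ^ (L - j)) := by
  have hML' : (2 : ℝ) ^ L ≤ M := by exact_mod_cast hML
  have hrem : ∀ n ≤ L, (M : ℝ) / 2 ^ n ≤ M - ∑ k ∈ Icc 1 n, c k := fun n hn ↦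
    div_two_pow_le_sub_sum fun j hj ↦ by
      rw [hrec (j + 1) (mem_Icc.2 ⟨by omega, by omega⟩), Nat.add_sub_cancel]
      exact min_le_left _ _
  have hterm : ∀ j ∈ Icc 1 L, max (c j - 2 ^ (L - j)) 0 = c j - min B (2 ^ (L - j)) := by
    intro j hj
    obtain ⟨h1, hjL⟩ := mem_Icc.1 hj
    have hpow : (2 : ℝ) ^ (L - j) * 2 * 2 ^ (j - 1) = 2 ^ L := by
      rw [← pow_succ, ← pow_add]; congr 1; omega
    have hhalf : (2 : ℝ) ^ (L - j) * 2 ≤ (M : ℝ) / 2 ^ (j - 1) := by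
      rw [le_div_iff₀ (by positivity), hpow]; exact hML'
    rw [hrec j hj]
    exact max_min_sub_zero_eq (by linarith [hrem (j - 1) (by omega)])
  have hlast : (1 : ℝ) ≤ M - ∑ k ∈ Icc 1 L, c k :=
    le_trans ((one_le_div (by positivity)).2 hML') (hrem L le_rfl)
  rw [excess, sum_congr rfl hterm, sum_sub_distrib, max_eq_left (by linarith)]
  ring

lemma two_div_mul_excess (M L : ℕ) (c : ℕ → ℝ) :
    2 / (M : ℝ) * excess M L c =
      ∑ j ∈ Icc 1 L, 2 / (M : ℝ) * max (c j - (2 : ℝ) ^ (L - j)) 0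
        + 2 / (M : ℝ) * max ((M : ℝ) - ∑ j ∈ Icc 1 L, c j - 1) 0 := by
  rw [excess, mul_add, mul_sum]

theorem stmt8_general (M L : ℕ) (hML : 2 ^ L ≤ M)
    (B : ℝ)
    (c : ℕ → ℝ) (hc1 : c 1 = min ((M : ℝ) / 2) B)
    (hcj : ∀ j, 1 < j → j ≤ L →
      c j = min (((M : ℝ) - ∑ k ∈ Finset.Icc 1 (j - 1), c k) / 2) B)
    (c' : ℕ → ℝ)
    (hc'B : ∀ j ∈ Finset.Icc 1 L, c' j ≤ B) :
    (∑ j ∈ Finset.Icc 1 L, (2 / (M : ℝ)) * max (c j - (2 : ℝ) ^ (L - j)) 0)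
      + (2 / (M : ℝ)) * max ((M : ℝ) - (∑ j ∈ Finset.Icc 1 L, c j) - 1) 0 ≤
    (∑ j ∈ Finset.Icc 1 L, (2 / (M : ℝ)) * max (c' j - (2 : ℝ) ^ (L - j)) 0)
      + (2 / (M : ℝ)) * max ((M : ℝ) - (∑ j ∈ Finset.Icc 1 L, c' j) - 1) 0 := by
  have hexcess : excess M L c ≤ excess M L c' :=
    (excess_of_greedy hML (greedy_rec hc1 hcj)).le.trans (sub_sum_min_le_excess M L hc'B)
  rw [← two_div_mul_excess, ← two_div_mul_excess]
  exact mul_le_mul_of_nonneg_left hexcess (by positivity)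

/-- For integers `M ≥ 2`, `L ≥ 1` with `2^L ≤ M` and a real peak cost `B ≥ 1`: among
all feasible `c'` (with `0 ≤ c' j ≤ B` for `j ∈ [1, L]` and `∑_j c' j ≤ M`), the
distortion
`D(c) = ∑_{j=1}^{L} (2/M) * max (c j - 2^(L-j)) 0 + (2/M) * max (M - ∑_j c j - 1) 0`
is minimized by the greedy recursion `c 1 = min (M/2) B`,
`c j = min ((M - ∑_{k<j} c k)/2) B`. -/
theorem stmt8 (M L : ℕ) (hM : 2 ≤ M) (hL : 1 ≤ L) (hML : 2 ^ L ≤ M)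
    (B : ℝ) (hB : 1 ≤ B)
    (c : ℕ → ℝ) (hc1 : c 1 = min ((M : ℝ) / 2) B)
    (hcj : ∀ j, 1 < j → j ≤ L →
      c j = min (((M : ℝ) - ∑ k ∈ Finset.Icc 1 (j - 1), c k) / 2) B)
    (c' : ℕ → ℝ) (hc'0 : ∀ j ∈ Finset.Icc 1 L, 0 ≤ c' j)
    (hc'B : ∀ j ∈ Finset.Icc 1 L, c' j ≤ B)
    (hc'sum : ∑ j ∈ Finset.Icc 1 L, c' j ≤ (M : ℝ)) :
    (∑ j ∈ Finset.Icc 1 L, (2 / (M : ℝ)) * max (c j - (2 : ℝ) ^ (L - j)) 0)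
      + (2 / (M : ℝ)) * max ((M : ℝ) - (∑ j ∈ Finset.Icc 1 L, c j) - 1) 0 ≤
    (∑ j ∈ Finset.Icc 1 L, (2 / (M : ℝ)) * max (c' j - (2 : ℝ) ^ (L - j)) 0)
      + (2 / (M : ℝ)) * max ((M : ℝ) - (∑ j ∈ Finset.Icc 1 L, c' j) - 1) 0 :=
  stmt8_general M L hML B c hc1 hcj c' hc'B
end

section
/- Lower bound via Jensen for adaptive search: for any adaptive strategy with query sets of size at most B, the total distortion (2/M)Σ_{y^L} max(|B_{y^L}| - 1, 0) is at least Σ_{k=1}^L (2/M)·max(c̃_k - 2^{L-k}, 0) + (2/M)·max(M - Σ_k c̃_k - 1, 0), where c̃_k = Σ_{y^L ∈ β_k} |B_{y^L}| and c̃_k ≤ B. -/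
/-!
A deterministic adaptive strategy assigns every state `s` its answer sequence, and `B_y` is the
fibre of this map over `y`, so the sets `B_y` partition the `M` states. If the answers first say
`1` at position `k`, the earlier answers were all `0`, so every state in `⋃_{y ∈ β_k} B_y` lies in
the one query set `A_k(0, …, 0)`: this gives `c̃_k ≤ B`. Summing `max (|B_y| - 1) 0 ≥ |B_y| - 1`
over `β_k`, which has at most `2^(L-1-k)` elements, bounds the contribution of `β_k` below by
`c̃_k - 2^(L-1-k)`; the only remaining sequence is the all-zero one, whose set has
`M - ∑_k c̃_k` elements.
-/

/-- Posterior support of an adaptive query strategy: states consistent with the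
answer sequence `y`. -/
def consistentSet (M L : ℕ) (A : (j : Fin L) → (Fin (j : ℕ) → Bool) → Finset (Fin M))
    (y : Fin L → Bool) : Finset (Fin M) :=
  Finset.univ.filter (fun s => ∀ j : Fin L,
    (s ∈ A j (fun i => y ⟨(i : ℕ), i.isLt.trans j.isLt⟩)) ↔ y j = true)

open Finset

section FirstTrue

variable {L : ℕ}

/-- The paper's `β_k`, zero-indexed. -/
def firstTrueAt (k : Fin L) : Finset (Fin L → Bool) :=
  univ.filter fun y => (∀ j, j < k → y j = false) ∧ y k = true

theorem mem_firstTrueAt {k : Fin L} {y : Fin L → Bool} :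
    y ∈ firstTrueAt k ↔ Fin.find? y = some k := by
  simp [firstTrueAt, and_comm]

theorem card_firstTrueAt_le (k : Fin L) : #(firstTrueAt k) ≤ 2 ^ (L - 1 - k) := by
  calc #(firstTrueAt k) ≤ Fintype.card (Ioi k → Bool) :=
        card_le_card_of_injOn (fun y j => y j) (fun _ _ => mem_univ _) ?_
    _ = 2 ^ (L - 1 - k) := by
      rw [Fintype.card_fun, Fintype.card_coe, Fin.card_Ioi, Fintype.card_bool]
  intro y hy y' hy' h
  simp only [coe_filter, firstTrueAt, mem_univ, true_and, Set.mem_ofPred_eq] at hy hy'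
  funext j
  rcases lt_trichotomy j k with hj | rfl | hj
  · rw [hy.1 j hj, hy'.1 j hj]
  · rw [hy.2, hy'.2]
  · exact congrFun h ⟨j, mem_Ioi.2 hj⟩

theorem sum_eq_add_sum_firstTrueAt {β : Type*} [AddCommMonoid β] (f : (Fin L → Bool) → β) :
    ∑ y, f y = f (fun _ => false) + ∑ k, ∑ y ∈ firstTrueAt k, f y := by
  rw [← sum_fiberwise univ Fin.find? f, Fintype.sum_option]
  have hnone : univ.filter (fun y : Fin L → Bool => Fin.find? y = none) = {fun _ => false} := by
    ext y
    simp [funext_iff]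
  have hsome (k : Fin L) : univ.filter (fun y => Fin.find? y = some k) = firstTrueAt k := by
    ext y
    simp [mem_firstTrueAt]
  simp only [hnone, hsome, sum_singleton]

end FirstTrue

section Answers

variable {α : Type*} [DecidableEq α] {L : ℕ} (A : (j : Fin L) → (Fin j → Bool) → Finset α)

def answers (s : α) : Fin L → Bool
  | j => decide (s ∈ A j fun i => answers s ⟨i, i.isLt.trans j.isLt⟩)
termination_by j => (j : ℕ)

theorem answers_apply (s : α) (j : Fin L) :
    answers A s j = decide (s ∈ A j fun i => answers A s ⟨i, i.isLt.trans j.isLt⟩) := by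
  rw [answers]

end Answers

section ConsistentSet

variable {M L : ℕ} (A : (j : Fin L) → (Fin j → Bool) → Finset (Fin M))

theorem mem_consistentSet_iff {s : Fin M} {y : Fin L → Bool} :
    s ∈ consistentSet M L A y ↔ answers A s = y := by
  simp only [consistentSet, mem_filter, mem_univ, true_and]
  constructor
  · intro h
    funext j
    induction j using WellFoundedLT.induction with
    | _ j ih =>
      have hprefix : (fun i : Fin j => answers A s ⟨i, i.isLt.trans j.isLt⟩) =
          fun i : Fin j => y ⟨i, i.isLt.trans j.isLt⟩ := funext fun i => ih _ i.isLt
      rw [answers_apply, hprefix, Bool.eq_iff_iff, decide_eq_true_iff, h j]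
  · rintro rfl j
    rw [answers_apply A s j, decide_eq_true_iff]

theorem consistentSet_eq_filter (y : Fin L → Bool) :
    consistentSet M L A y = univ.filter (answers A · = y) := by
  ext
  simp [mem_consistentSet_iff]

theorem sum_card_consistentSet : ∑ y, #(consistentSet M L A y) = M := by
  simp_rw [consistentSet_eq_filter]
  rw [← card_eq_sum_card_fiberwise fun s _ => mem_univ (answers A s), card_univ, Fintype.card_fin]

theorem pairwise_disjoint_consistentSet :
    Pairwise (Function.onFun Disjoint (consistentSet M L A)) := by
  intro y y' hne
  rw [Function.onFun, disjoint_left]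
  intro s h h'
  rw [mem_consistentSet_iff] at h h'
  exact hne (h ▸ h')

theorem consistentSet_subset_of_mem_firstTrueAt {k : Fin L} {y : Fin L → Bool}
    (hy : y ∈ firstTrueAt k) : consistentSet M L A y ⊆ A k fun _ => false := by
  intro s hs
  simp only [consistentSet, firstTrueAt, mem_filter, mem_univ, true_and] at hs hy
  have hprefix : (fun i : Fin k => y ⟨i, i.isLt.trans k.isLt⟩) = fun _ => false :=
    funext fun i => hy.1 _ i.isLt
  simpa [hprefix, hy.2] using hs k

theorem sum_card_consistentSet_firstTrueAt_le (k : Fin L) :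
    ∑ y ∈ firstTrueAt k, #(consistentSet M L A y) ≤ #(A k fun _ => false) := by
  rw [← card_biUnion ((pairwise_disjoint_consistentSet A).set_pairwise _)]
  exact card_le_card (biUnion_subset.2 fun y hy => consistentSet_subset_of_mem_firstTrueAt A hy)

end ConsistentSet

theorem max_sum_sub_card_le_sum_max_sub_one {ι R : Type*} [Ring R] [LinearOrder R]
    [IsOrderedRing R] (s : Finset ι) (f : ι → R) :
    max (∑ i ∈ s, f i - #s) 0 ≤ ∑ i ∈ s, max (f i - 1) 0 := by
  refine max_le ?_ (sum_nonneg fun i _ => le_max_right _ _)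
  calc ∑ i ∈ s, f i - #s = ∑ i ∈ s, (f i - 1) := by simp [sum_sub_distrib]
    _ ≤ _ := sum_le_sum fun i _ => le_max_left _ _

theorem stmt17_general (M L B : ℕ)
    (A : (j : Fin L) → (Fin (j : ℕ) → Bool) → Finset (Fin M))
    (hA : ∀ j h, (A j h).card ≤ B) :
    (∀ k : Fin L,
      (∑ y ∈ Finset.univ.filter (fun y : Fin L → Bool =>
          (∀ j, j < k → y j = false) ∧ y k = true),
        ((consistentSet M L A y).card : ℝ)) ≤ (B : ℝ)) ∧
    (∑ k : Fin L, (2 / (M : ℝ)) *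
        max ((∑ y ∈ Finset.univ.filter (fun y : Fin L → Bool =>
            (∀ j, j < k → y j = false) ∧ y k = true),
          ((consistentSet M L A y).card : ℝ)) - (2 : ℝ) ^ (L - 1 - (k : ℕ))) 0)
      + (2 / (M : ℝ)) *
        max ((M : ℝ) - (∑ k : Fin L,
            ∑ y ∈ Finset.univ.filter (fun y : Fin L → Bool =>
              (∀ j, j < k → y j = false) ∧ y k = true),
          ((consistentSet M L A y).card : ℝ)) - 1) 0
      ≤ (2 / (M : ℝ)) * ∑ y : Fin L → Bool,
          max (((consistentSet M L A y).card : ℝ) - 1) 0 := by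
  have hquery (k : Fin L) : ∑ y ∈ firstTrueAt k, (#(consistentSet M L A y) : ℝ) ≤ B := by
    exact_mod_cast (sum_card_consistentSet_firstTrueAt_le A k).trans (hA k _)
  have hcover : (M : ℝ) = #(consistentSet M L A fun _ => false) +
      ∑ k, ∑ y ∈ firstTrueAt k, (#(consistentSet M L A y) : ℝ) := by
    exact_mod_cast (sum_card_consistentSet A).symm.trans (sum_eq_add_sum_firstTrueAt _)
  refine ⟨hquery, ?_⟩
  simp only [← firstTrueAt.eq_1]
  rw [← mul_sum, ← mul_add,
    sum_eq_add_sum_firstTrueAt fun y => max ((#(consistentSet M L A y) : ℝ) - 1) 0, add_comm]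
  gcongr (2 / (M : ℝ)) * (?_ + ?_)
  · rw [hcover, add_sub_cancel_right]
  · refine sum_le_sum fun k _ => le_trans ?_ (max_sum_sub_card_le_sum_max_sub_one _ _)
    gcongr
    exact_mod_cast card_firstTrueAt_le k

/-- Lower bound via Jensen for adaptive search: for any adaptive strategy with query
sets of size at most `B`, letting `c̃ k = ∑_{y ∈ β k} |B_y|` (with `β k` the set of
answer sequences whose first `1` is at position `k`, zero-indexed), we have
`c̃ k ≤ B` for every `k`, and the total distortion
`(2/M) ∑_y max (|B_y| - 1) 0` is at least
`∑ k (2/M) max (c̃ k - 2^(L-1-k)) 0 + (2/M) max (M - ∑ k c̃ k - 1) 0`. -/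
theorem stmt17 (M L B : ℕ) (hM : 0 < M) (hL : 0 < L) (hB : 0 < B)
    (A : (j : Fin L) → (Fin (j : ℕ) → Bool) → Finset (Fin M))
    (hA : ∀ j h, (A j h).card ≤ B) :
    (∀ k : Fin L,
      (∑ y ∈ Finset.univ.filter (fun y : Fin L → Bool =>
          (∀ j, j < k → y j = false) ∧ y k = true),
        ((consistentSet M L A y).card : ℝ)) ≤ (B : ℝ)) ∧
    (∑ k : Fin L, (2 / (M : ℝ)) *
        max ((∑ y ∈ Finset.univ.filter (fun y : Fin L → Bool =>
            (∀ j, j < k → y j = false) ∧ y k = true),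
          ((consistentSet M L A y).card : ℝ)) - (2 : ℝ) ^ (L - 1 - (k : ℕ))) 0)
      + (2 / (M : ℝ)) *
        max ((M : ℝ) - (∑ k : Fin L,
            ∑ y ∈ Finset.univ.filter (fun y : Fin L → Bool =>
              (∀ j, j < k → y j = false) ∧ y k = true),
          ((consistentSet M L A y).card : ℝ)) - 1) 0
      ≤ (2 / (M : ℝ)) * ∑ y : Fin L → Bool,
          max (((consistentSet M L A y).card : ℝ) - 1) 0 :=
  stmt17_general M L B A hA
end
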